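/- Let z : [0,N] → ℂᴺ be an H¹ path of N equal unit masses satisfying the choreography condition z_j(t) = z_0(j+t) (indices in ℤ/N, time extended N-periodically), and suppose Im z_0 vanishes at some point and Re z_0 vanishes at some point of [0,N]. Then the Lagrangian action A(z) = ∫₀ᴺ (½ Σ_j |ż_j|² + Σ_{j<k} |z_j − z_k|^{−1}) dt satisfies A(z) ≥ ‖z‖²_{H¹} / (2(N²+1)), where ‖z‖²_{H¹} = ∫₀ᴺ Σ_j (|z_j|² + |ż_j|²) dt. In particular, the action is coercive on this class of loops. -/

import Mathlib

/-!
Write `f = z₀`. By the choreography condition every `z_j` is a time shift of `f`, so by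
`N`-periodicity the kinetic term integrates to `N ∫₀ᴺ |f'|²` and the `H¹` norm to
`N (∫₀ᴺ |f|² + ∫₀ᴺ |f'|²)`. Since `Re f` and `Im f` each vanish somewhere on `[0, N]`, the
fundamental theorem of calculus and Cauchy–Schwarz give `|f t|² ≤ N ∫₀ᴺ |f'|²` for every `t`,
hence the Poincaré inequality `∫₀ᴺ |f|² ≤ N² ∫₀ᴺ |f'|²`. So `‖z‖²_{H¹} ≤ N (N² + 1) ∫₀ᴺ |f'|²`,
which is `2 (N² + 1)` times the kinetic part of the action; the potential part is nonnegative.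
-/
open MeasureTheory Set
open scoped Interval

theorem Function.Periodic.deriv {𝕜 F : Type*} [NontriviallyNormedField 𝕜] [NormedAddCommGroup F]
    [NormedSpace 𝕜 F] {f : 𝕜 → F} {c : 𝕜} (hf : Function.Periodic f c) :
    Function.Periodic (deriv f) c := fun x => by
  rw [← deriv_comp_add_const, funext hf]

section Periodic

variable {E : Type*} [NormedAddCommGroup E] [NormedSpace ℝ E] {g : ℝ → E} {T : ℝ}

theorem Function.Periodic.intervalIntegral_comp_add_right (hg : Function.Periodic g T) (c : ℝ) :
    ∫ t in (0 : ℝ)..T, g (t + c) = ∫ t in (0 : ℝ)..T, g t := by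
  rw [intervalIntegral.integral_comp_add_right, zero_add, add_comm T,
    hg.intervalIntegral_add_eq c 0, zero_add]

theorem Function.Periodic.intervalIntegral_sum_comp_add {ι : Type*} (hg : Function.Periodic g T)
    (hint : IntervalIntegrable g volume 0 T) (s : Finset ι) (c : ι → ℝ) :
    ∫ t in (0 : ℝ)..T, ∑ j ∈ s, g (t + c j) = s.card • ∫ t in (0 : ℝ)..T, g t := by
  rcases eq_or_ne T 0 with rfl | hT
  · simp
  rw [intervalIntegral.integral_finsetSum fun j _ => by
    simpa using (hg.intervalIntegrable₀ hT hint (c j) (T + c j)).comp_add_right (c j)]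
  simp only [hg.intervalIntegral_comp_add_right, Finset.sum_const]

end Periodic

theorem sq_intervalIntegral_le_mul_intervalIntegral_sq {a b : ℝ} (hab : a ≤ b) {g : ℝ → ℝ}
    (hg : IntervalIntegrable g volume a b)
    (hg2 : IntervalIntegrable (fun t => g t ^ 2) volume a b) :
    (∫ t in a..b, g t) ^ 2 ≤ (b - a) * ∫ t in a..b, g t ^ 2 := by
  -- `x ↦ ∫ (g - x)²` is a nonnegative quadratic, so its discriminant is nonpositive.
  have hquad : ∀ x : ℝ,
      0 ≤ (b - a) * (x * x) + (-2 * ∫ t in a..b, g t) * x + ∫ t in a..b, g t ^ 2 := by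
    intro x
    have hexpand : ∫ t in a..b, (g t - x) ^ 2
        = ∫ t in a..b, (g t ^ 2 - g t * (2 * x) + x ^ 2) :=
      intervalIntegral.integral_congr fun t _ => by ring
    have hnonneg : 0 ≤ ∫ t in a..b, (g t - x) ^ 2 :=
      intervalIntegral.integral_nonneg hab fun t _ => sq_nonneg _
    rw [hexpand, intervalIntegral.integral_add (hg2.sub (hg.mul_const _)) intervalIntegrable_const,
      intervalIntegral.integral_sub hg2 (hg.mul_const _), intervalIntegral.integral_mul_const,
      intervalIntegral.integral_const, smul_eq_mul] at hnonneg
    linarith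
  have hdiscrim := discrim_le_zero hquad
  rw [discrim] at hdiscrim
  linarith

theorem MeasureTheory.MemLp.intervalIntegrable_sq_norm {E : Type*} [NormedAddCommGroup E]
    {u : ℝ → E} {a b : ℝ} (hab : a ≤ b) (hu : MemLp u 2 (volume.restrict (Ioc a b))) :
    IntervalIntegrable (fun x => ‖u x‖ ^ 2) volume a b :=
  (intervalIntegrable_iff_integrableOn_Ioc_of_le hab).2
    ((memLp_two_iff_integrable_sq_norm hu.1).1 hu)

section Poincare

variable {E : Type*} [NormedAddCommGroup E] [NormedSpace ℝ E] [CompleteSpace E]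
  {u u' : ℝ → E} {a b s t : ℝ}

theorem norm_le_intervalIntegral_norm_of_hasDerivAt_of_eq_zero
    (hu : ∀ x ∈ Icc a b, HasDerivAt u (u' x) x) (hu' : IntervalIntegrable u' volume a b)
    (hs : s ∈ Icc a b) (hus : u s = 0) (ht : t ∈ Icc a b) :
    ‖u t‖ ≤ ∫ x in a..b, ‖u' x‖ := by
  have hab : a ≤ b := hs.1.trans hs.2
  have hst : [[s, t]] ⊆ [[a, b]] := by
    rw [uIcc_of_le hab]; exact uIcc_subset_Icc hs ht
  have hftc : ∫ x in s..t, u' x = u t := by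
    rw [intervalIntegral.integral_eq_sub_of_hasDerivAt
      (fun x hx => hu x (uIcc_of_le hab ▸ hst hx)) (hu'.mono_set hst), hus, sub_zero]
  calc ‖u t‖ = ‖∫ x in s..t, u' x‖ := by rw [hftc]
    _ ≤ ∫ x in Ι s t, ‖u' x‖ := intervalIntegral.norm_integral_le_integral_norm_uIoc
    _ ≤ ∫ x in Ι a b, ‖u' x‖ :=
      setIntegral_mono_set (intervalIntegrable_iff.1 hu').norm
        (Filter.Eventually.of_forall fun _ => norm_nonneg _)
        (uIoc_subset_uIoc_of_uIcc_subset_uIcc hst).eventuallyLE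
    _ = ∫ x in a..b, ‖u' x‖ := by rw [uIoc_of_le hab, intervalIntegral.integral_of_le hab]

theorem sq_norm_le_of_hasDerivAt_of_eq_zero
    (hu : ∀ x ∈ Icc a b, HasDerivAt u (u' x) x) (hu' : MemLp u' 2 (volume.restrict (Ioc a b)))
    (hs : s ∈ Icc a b) (hus : u s = 0) (ht : t ∈ Icc a b) :
    ‖u t‖ ^ 2 ≤ (b - a) * ∫ x in a..b, ‖u' x‖ ^ 2 := by
  have hab : a ≤ b := hs.1.trans hs.2
  have hu'1 : IntervalIntegrable u' volume a b :=
    (intervalIntegrable_iff_integrableOn_Ioc_of_le hab).2 (hu'.integrable one_le_two)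
  calc ‖u t‖ ^ 2 ≤ (∫ x in a..b, ‖u' x‖) ^ 2 := by
        gcongr
        exact norm_le_intervalIntegral_norm_of_hasDerivAt_of_eq_zero hu hu'1 hs hus ht
    _ ≤ (b - a) * ∫ x in a..b, ‖u' x‖ ^ 2 :=
      sq_intervalIntegral_le_mul_intervalIntegral_sq hab hu'1.norm
        (hu'.intervalIntegrable_sq_norm hab)

end Poincare

section Complex

variable {f f' : ℝ → ℂ} {a b : ℝ}

theorem Complex.sq_norm_le_of_hasDerivAt_of_re_eq_zero_of_im_eq_zero {t : ℝ}
    (hf : ∀ x ∈ Icc a b, HasDerivAt f (f' x) x) (hf' : MemLp f' 2 (volume.restrict (Ioc a b)))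
    (hre : ∃ s ∈ Icc a b, (f s).re = 0) (him : ∃ s ∈ Icc a b, (f s).im = 0) (ht : t ∈ Icc a b) :
    ‖f t‖ ^ 2 ≤ (b - a) * ∫ x in a..b, ‖f' x‖ ^ 2 := by
  obtain ⟨s, hs, hfs⟩ := hre
  obtain ⟨s', hs', hfs'⟩ := him
  have hab : a ≤ b := hs.1.trans hs.2
  have hbound_re := sq_norm_le_of_hasDerivAt_of_eq_zero (u := fun x => (f x).re)
    (u' := fun x => (f' x).re) (fun x hx => reCLM.hasFDerivAt.comp_hasDerivAt x (hf x hx))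
    hf'.re hs hfs ht
  have hbound_im := sq_norm_le_of_hasDerivAt_of_eq_zero (u := fun x => (f x).im)
    (u' := fun x => (f' x).im) (fun x hx => imCLM.hasFDerivAt.comp_hasDerivAt x (hf x hx))
    hf'.im hs' hfs' ht
  have hsq : ∀ w : ℂ, ‖w‖ ^ 2 = ‖w.re‖ ^ 2 + ‖w.im‖ ^ 2 := fun w => by
    rw [Complex.sq_norm, normSq_apply, Real.norm_eq_abs, Real.norm_eq_abs, sq_abs, sq_abs]
    ring
  simp_rw [hsq]
  rw [intervalIntegral.integral_add (f := fun x => ‖(f' x).re‖ ^ 2)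
    (g := fun x => ‖(f' x).im‖ ^ 2) (hf'.re.intervalIntegrable_sq_norm hab)
    (hf'.im.intervalIntegrable_sq_norm hab)]
  linarith

theorem Complex.intervalIntegral_sq_norm_le_of_re_eq_zero_of_im_eq_zero
    (hf : ∀ x ∈ Icc a b, HasDerivAt f (f' x) x) (hf' : MemLp f' 2 (volume.restrict (Ioc a b)))
    (hre : ∃ s ∈ Icc a b, (f s).re = 0) (him : ∃ s ∈ Icc a b, (f s).im = 0) :
    ∫ t in a..b, ‖f t‖ ^ 2 ≤ (b - a) ^ 2 * ∫ t in a..b, ‖f' t‖ ^ 2 := by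
  have hab : a ≤ b := let ⟨_, hs, _⟩ := hre; hs.1.trans hs.2
  calc ∫ t in a..b, ‖f t‖ ^ 2 ≤ ‖∫ t in a..b, ‖f t‖ ^ 2‖ := Real.le_norm_self _
    _ ≤ ((b - a) * ∫ t in a..b, ‖f' t‖ ^ 2) * |b - a| :=
      intervalIntegral.norm_integral_le_of_norm_le_const fun t ht => by
        rw [Real.norm_of_nonneg (sq_nonneg _)]
        exact sq_norm_le_of_hasDerivAt_of_re_eq_zero_of_im_eq_zero hf hf' hre him
          (Ioc_subset_Icc_self (uIoc_of_le hab ▸ ht))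
    _ = (b - a) ^ 2 * ∫ t in a..b, ‖f' t‖ ^ 2 := by rw [abs_of_nonneg (sub_nonneg.2 hab)]; ring

theorem Complex.intervalIntegral_sum_sq_norm_add_sq_norm_deriv_comp_add_le {T : ℝ}
    (hf : Function.Periodic f T) (hdiff : Differentiable ℝ f)
    (hf' : IntervalIntegrable (fun t => ‖deriv f t‖ ^ 2) volume 0 T)
    (hre : ∃ s ∈ Icc 0 T, (f s).re = 0) (him : ∃ s ∈ Icc 0 T, (f s).im = 0)
    {ι : Type*} (s : Finset ι) (c : ι → ℝ) :
    ∫ t in (0 : ℝ)..T, ∑ j ∈ s, (‖f (t + c j)‖ ^ 2 + ‖deriv f (t + c j)‖ ^ 2)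
      ≤ (T ^ 2 + 1) * ∫ t in (0 : ℝ)..T, ∑ j ∈ s, ‖deriv f (t + c j)‖ ^ 2 := by
  have hT : 0 ≤ T := let ⟨_, hs, _⟩ := hre; hs.1.trans hs.2
  have hsq : IntervalIntegrable (fun t => ‖f t‖ ^ 2) volume 0 T :=
    (hdiff.continuous.norm.pow 2).intervalIntegrable _ _
  have hL2 : MemLp (deriv f) 2 (volume.restrict (Ioc 0 T)) :=
    (memLp_two_iff_integrable_sq_norm (measurable_deriv f).aestronglyMeasurable).2
      ((intervalIntegrable_iff_integrableOn_Ioc_of_le hT).1 hf')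
  have hpoincare := intervalIntegral_sq_norm_le_of_re_eq_zero_of_im_eq_zero
    (fun t _ => (hdiff t).hasDerivAt) hL2 hre him
  rw [sub_zero] at hpoincare
  have hper' : Function.Periodic (fun t => ‖deriv f t‖ ^ 2) T := fun t => by
    simp only [hf.deriv t]
  have hper : Function.Periodic (fun t => ‖f t‖ ^ 2 + ‖deriv f t‖ ^ 2) T := fun t => by
    simp only [hf t, hf.deriv t]
  rw [hper.intervalIntegral_sum_comp_add (hsq.add hf') s c,
    hper'.intervalIntegral_sum_comp_add hf' s c,
    intervalIntegral.integral_add hsq hf', nsmul_eq_mul, nsmul_eq_mul]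
  have hcard : (0 : ℝ) ≤ s.card := s.card.cast_nonneg
  linarith [mul_le_mul_of_nonneg_left hpoincare hcard]

end Complex

/-- Coercivity of the action on choreographic loops: for an `N`-periodic `H¹` choreography
`z_j(t) = z_0(t + j)` of `N` unit masses whose first component has vanishing real part and
vanishing imaginary part somewhere on `[0,N]`, the Lagrangian action
`A(z) = ∫₀ᴺ (½ Σ_j |ż_j|² + Σ_{j<k} |z_j - z_k|⁻¹)` satisfies
`A(z) ≥ ‖z‖²_{H¹} / (2(N²+1))`. -/
theorem action_coercive (N : ℕ) (hN : 3 ≤ N) (z z' : Fin N → ℝ → ℂ)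
    (hderiv : ∀ j t, HasDerivAt (z j) (z' j t) t)
    (hper : ∀ (j : Fin N) (t : ℝ), z j (t + N) = z j t)
    (hchor : ∀ (j : Fin N) (t : ℝ), z j t = z ⟨0, by omega⟩ (t + ((j : ℕ) : ℝ)))
    (hre : ∃ s ∈ Set.Icc (0:ℝ) N, (z ⟨0, by omega⟩ s).re = 0)
    (him : ∃ s ∈ Set.Icc (0:ℝ) N, (z ⟨0, by omega⟩ s).im = 0)
    (hint0 : ∀ j, IntervalIntegrable (fun t => ‖z' j t‖ ^ 2) volume 0 N)
    (hintU : IntervalIntegrable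
      (fun t => ∑ p ∈ Finset.univ.filter (fun p : Fin N × Fin N => p.1 < p.2),
        ‖z p.1 t - z p.2 t‖⁻¹) volume 0 N) :
    (∫ t in (0:ℝ)..N, ∑ j, (‖z j t‖ ^ 2 + ‖z' j t‖ ^ 2)) / (2 * ((N : ℝ) ^ 2 + 1)) ≤
      ∫ t in (0:ℝ)..N, ((1/2) * ∑ j, ‖z' j t‖ ^ 2 +
        ∑ p ∈ Finset.univ.filter (fun p : Fin N × Fin N => p.1 < p.2),
          ‖z p.1 t - z p.2 t‖⁻¹) := by
  set f := z ⟨0, by omega⟩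
  have hz : ∀ j t, z j t = f (t + (j : ℕ)) := hchor
  have hz' : ∀ j t, z' j t = deriv f (t + (j : ℕ)) := fun j t => by
    rw [← (hderiv j t).deriv, funext (hz j), deriv_comp_add_const]
  have hdiff : Differentiable ℝ f := fun t => (hderiv _ t).differentiableAt
  have hf' : IntervalIntegrable (fun t => ‖deriv f t‖ ^ 2) volume 0 N := by
    simpa only [hz', Nat.cast_zero, add_zero] using hint0 ⟨0, by omega⟩
  have hH1 : ∫ t in (0:ℝ)..N, ∑ j, (‖z j t‖ ^ 2 + ‖z' j t‖ ^ 2)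
      ≤ ((N : ℝ) ^ 2 + 1) * ∫ t in (0:ℝ)..N, ∑ j, ‖z' j t‖ ^ 2 := by
    simp_rw [hz, hz']
    exact Complex.intervalIntegral_sum_sq_norm_add_sq_norm_deriv_comp_add_le (hper _) hdiff hf'
      hre him _ _
  have hkinetic_int : IntervalIntegrable (fun t => ∑ j, ‖z' j t‖ ^ 2) volume 0 N := by
    simpa only [Finset.sum_fn] using IntervalIntegrable.sum Finset.univ fun j _ => hint0 j
  have hpotential : 0 ≤ ∫ t in (0:ℝ)..N,
      ∑ p ∈ Finset.univ.filter (fun p : Fin N × Fin N => p.1 < p.2), ‖z p.1 t - z p.2 t‖⁻¹ :=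
    intervalIntegral.integral_nonneg N.cast_nonneg fun t _ => by positivity
  calc (∫ t in (0:ℝ)..N, ∑ j, (‖z j t‖ ^ 2 + ‖z' j t‖ ^ 2)) / (2 * ((N : ℝ) ^ 2 + 1))
      ≤ ((N : ℝ) ^ 2 + 1) * (∫ t in (0:ℝ)..N, ∑ j, ‖z' j t‖ ^ 2) / (2 * ((N : ℝ) ^ 2 + 1)) := by
        gcongr
    _ = 1 / 2 * ∫ t in (0:ℝ)..N, ∑ j, ‖z' j t‖ ^ 2 := by field_simp
    _ ≤ 1 / 2 * (∫ t in (0:ℝ)..N, ∑ j, ‖z' j t‖ ^ 2) + ∫ t in (0:ℝ)..N,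
        ∑ p ∈ Finset.univ.filter (fun p : Fin N × Fin N => p.1 < p.2), ‖z p.1 t - z p.2 t‖⁻¹ :=
      le_add_of_nonneg_right hpotential
    _ = _ := by
      rw [intervalIntegral.integral_add (hkinetic_int.const_mul _) hintU,
        intervalIntegral.integral_const_mul]
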